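/- (Proposition 2, full unimodality of the energy efficiency) If N̄ ≥ 1 is a natural number with d·(N̄+1) ≤ c and EE(N̄+1) ≤ EE(N̄), then EE is nonincreasing beyond N̄ on the feasible range: for every natural number N with N̄ ≤ N and d·(N+1) ≤ c, one has EE(N+1) ≤ EE(N). -/

import Mathlib

/-!
Writing `D N = γ + ψ N`, the step `EE (N+1) ≤ EE N` is equivalent to
`(R (N+1) - R N) · D N ≤ ψ · R N`, and this inequality propagates from `N` to `N+1` as soon as
the increments of `R` do not increase at `N`, because `D` is affine with positive values.
So it suffices that `R` be discretely concave on the feasible range. The factor `c - d N` is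
nonnegative and decreasing there, so this reduces to `f` being nondecreasing and concave.
Finally `f = B · log p ∘ S` with `p x = 1 + β x²`: the partial sums `S` have nonnegative,
nonincreasing increments, and `log p` is nondecreasing and concave where `β x² ≥ 1`, which
holds for `S N ≥ α 1` by the assumption `β α(1)² ≥ 1`.
-/

open Finset Real

lemma mul_one_add_mul_sq_le_sq {β u a : ℝ} (hu : 0 ≤ u) (ha : 0 ≤ a) (h : 1 ≤ β * u ^ 2) :
    (1 + β * (u + 2 * a) ^ 2) * (1 + β * u ^ 2) ≤ (1 + β * (u + a) ^ 2) ^ 2 := by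
  have hβ : 0 < β := by nlinarith [sq_nonneg u]
  have hfactor : 0 ≤ β * (2 * u ^ 2 + 4 * u * a + a ^ 2) - 2 := by nlinarith [mul_nonneg hu ha]
  have hdiff : (1 + β * (u + a) ^ 2) ^ 2 - (1 + β * (u + 2 * a) ^ 2) * (1 + β * u ^ 2)
      = β * a ^ 2 * (β * (2 * u ^ 2 + 4 * u * a + a ^ 2) - 2) := by ring
  nlinarith [mul_nonneg (mul_nonneg hβ.le (sq_nonneg a)) hfactor]

lemma log_one_add_mul_sq_le_of_le {β x y : ℝ} (hβ : 0 ≤ β) (hx : 0 ≤ x) (hxy : x ≤ y) :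
    log (1 + β * x ^ 2) ≤ log (1 + β * y ^ 2) := by
  gcongr

lemma log_one_add_mul_sq_sub_le {β x y z : ℝ} (hx : 0 ≤ x) (hxy : x ≤ y) (hyz : y ≤ z)
    (hzy : z - y ≤ y - x) (h : 1 ≤ β * x ^ 2) :
    log (1 + β * z ^ 2) - log (1 + β * y ^ 2) ≤ log (1 + β * y ^ 2) - log (1 + β * x ^ 2) := by
  have hβ : 0 < β := by nlinarith [sq_nonneg x]
  have hz : log (1 + β * z ^ 2) ≤ log (1 + β * (x + 2 * (y - x)) ^ 2) :=
    log_one_add_mul_sq_le_of_le hβ.le (by linarith) (by linarith)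
  have hmid := mul_one_add_mul_sq_le_sq hx (sub_nonneg.2 hxy) h
  rw [add_sub_cancel] at hmid
  have hlog := log_le_log (by positivity) hmid
  rw [log_mul (by positivity) (by positivity), log_pow] at hlog
  push_cast at hlog
  linarith

section PartialSum

variable {α S : ℕ → ℝ}

lemma partialSum_succ (hS : ∀ N, S N = ∑ n ∈ Icc 1 N, α n) (N : ℕ) :
    S (N + 1) = S N + α (N + 1) := by
  rw [hS, hS, sum_Icc_succ_top (by omega)]

lemma partialSum_nonneg (hS : ∀ N, S N = ∑ n ∈ Icc 1 N, α n) (hα : ∀ n, 1 ≤ n → 0 ≤ α n)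
    (N : ℕ) : 0 ≤ S N := by
  rw [hS]
  exact sum_nonneg fun n hn => hα n (mem_Icc.1 hn).1

lemma le_partialSum (hS : ∀ N, S N = ∑ n ∈ Icc 1 N, α n) (hα : ∀ n, 1 ≤ n → 0 ≤ α n)
    {N : ℕ} (hN : 1 ≤ N) : α 1 ≤ S N := by
  rw [hS]
  exact single_le_sum (fun n hn => hα n (mem_Icc.1 hn).1) (mem_Icc.2 ⟨le_rfl, hN⟩)

lemma log_one_add_mul_sq_partialSum_sub_le {β : ℝ} (hS : ∀ N, S N = ∑ n ∈ Icc 1 N, α n)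
    (hα : ∀ n, 1 ≤ n → 0 ≤ α n) (hα_anti : ∀ n, 1 ≤ n → α (n + 1) ≤ α n)
    (hβα : 1 ≤ β * α 1 ^ 2) {N : ℕ} (hN : 1 ≤ N) :
    log (1 + β * S (N + 2) ^ 2) - log (1 + β * S (N + 1) ^ 2)
      ≤ log (1 + β * S (N + 1) ^ 2) - log (1 + β * S N ^ 2) := by
  have h1 := partialSum_succ hS N
  have h2 := partialSum_succ hS (N + 1)
  have hα1 := hα (N + 1) (by omega)
  have hα2 := hα (N + 2) (by omega)
  have hβ : 0 ≤ β := by nlinarith [sq_nonneg (α 1)]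
  have hsq : 1 ≤ β * S N ^ 2 := hβα.trans <| by
    gcongr
    exacts [hα 1 le_rfl, le_partialSum hS hα hN]
  refine log_one_add_mul_sq_sub_le (partialSum_nonneg hS hα N) (by linarith) (by linarith) ?_ hsq
  linarith [hα_anti (N + 1) (by omega)]

end PartialSum

lemma affine_mul_sub_le {f R : ℕ → ℝ} {c d : ℝ} (hR : ∀ N, R N = (c - d * (N : ℝ)) * f N)
    (hd : 0 ≤ d) {N : ℕ} (hc : d * ((N : ℝ) + 2) ≤ c) (hf_mono : f N ≤ f (N + 1))
    (hf_conc : f (N + 2) - f (N + 1) ≤ f (N + 1) - f N) :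
    R (N + 2) - R (N + 1) ≤ R (N + 1) - R N := by
  rw [hR, hR, hR]
  push_cast
  nlinarith [mul_nonneg (sub_nonneg.2 hc) (sub_nonneg.2 hf_conc),
    mul_nonneg hd (sub_nonneg.2 hf_mono)]

section AffineQuotient

variable {R : ℕ → ℝ} {γ ψ : ℝ}

lemma div_affine_succ_le_iff (hγ : 0 < γ) (hψ : 0 ≤ ψ) (N : ℕ) :
    R (N + 1) / (γ + ψ * ((N + 1 : ℕ) : ℝ)) ≤ R N / (γ + ψ * (N : ℝ))
      ↔ (R (N + 1) - R N) * (γ + ψ * N) ≤ ψ * R N := by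
  rw [div_le_div_iff₀ (by positivity) (by positivity)]
  push_cast
  constructor <;> intro h <;> linarith

lemma div_affine_succ_le_of_concave (hγ : 0 < γ) (hψ : 0 ≤ ψ) {M N : ℕ} (hMN : M ≤ N)
    (hR : ∀ n, M ≤ n → n < N → R (n + 2) - R (n + 1) ≤ R (n + 1) - R n)
    (hM : R (M + 1) / (γ + ψ * ((M + 1 : ℕ) : ℝ)) ≤ R M / (γ + ψ * (M : ℝ))) :
    R (N + 1) / (γ + ψ * ((N + 1 : ℕ) : ℝ)) ≤ R N / (γ + ψ * (N : ℝ)) := by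
  induction N, hMN using Nat.le_induction with
  | base => exact hM
  | succ N hMN ih =>
    have hN := (div_affine_succ_le_iff hγ hψ N).1 (ih fun n hn hnN => hR n hn (by omega))
    rw [div_affine_succ_le_iff hγ hψ]
    calc (R (N + 1 + 1) - R (N + 1)) * (γ + ψ * ((N + 1 : ℕ) : ℝ))
        ≤ (R (N + 1) - R N) * (γ + ψ * ((N + 1 : ℕ) : ℝ)) :=
          mul_le_mul_of_nonneg_right (hR N hMN (by omega)) (by positivity)
      _ = (R (N + 1) - R N) * (γ + ψ * N) + ψ * (R (N + 1) - R N) := by push_cast; ring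
      _ ≤ ψ * R (N + 1) := by linarith

end AffineQuotient

theorem ee_unimodal_general
    (B β : ℝ) (hB : 0 < B) (hβ : 0 < β)
    (α : ℕ → ℝ) (hα_pos : ∀ n, 1 ≤ n → 0 < α n)
    (hα_dec : ∀ n, 1 ≤ n → α (n + 1) ≤ α n)
    (hβα : 1 ≤ β * (α 1) ^ 2)
    (S : ℕ → ℝ) (hS : ∀ N, S N = ∑ n ∈ Finset.Icc 1 N, α n)
    (f : ℕ → ℝ) (hf : ∀ N, f N = B * Real.log (1 + β * (S N) ^ 2))
    (c d : ℝ) (hd : 0 < d)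
    (R : ℕ → ℝ) (hR : ∀ N, R N = (c - d * (N : ℝ)) * f N)
    (γ ψ : ℝ) (hγ : 0 < γ) (hψ : 0 < ψ)
    (EE : ℕ → ℝ) (hEE : ∀ N, EE N = R N / (γ + ψ * (N : ℝ)))
    (Nbar : ℕ) (hNbar : 1 ≤ Nbar)
    (hstep : EE (Nbar + 1) ≤ EE Nbar) :
    ∀ N : ℕ, Nbar ≤ N → d * ((N : ℝ) + 1) ≤ c → EE (N + 1) ≤ EE N := by
  intro N hN hfeas
  have hα : ∀ n, 1 ≤ n → 0 ≤ α n := fun n hn => (hα_pos n hn).le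
  have hf_mono : ∀ n, f n ≤ f (n + 1) := fun n => by
    rw [hf, hf, partialSum_succ hS]
    exact mul_le_mul_of_nonneg_left (log_one_add_mul_sq_le_of_le hβ.le
      (partialSum_nonneg hS hα n) (le_add_of_nonneg_right (hα _ n.succ_pos))) hB.le
  have hf_conc : ∀ n, 1 ≤ n → f (n + 2) - f (n + 1) ≤ f (n + 1) - f n := fun n hn => by
    simp only [hf, ← mul_sub]
    exact mul_le_mul_of_nonneg_left
      (log_one_add_mul_sq_partialSum_sub_le hS hα hα_dec hβα hn) hB.le
  have hR_conc : ∀ n, Nbar ≤ n → n < N → R (n + 2) - R (n + 1) ≤ R (n + 1) - R n := by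
    intro n hn hnN
    have hnN' : (n : ℝ) + 2 ≤ N + 1 := by exact_mod_cast (by omega : n + 2 ≤ N + 1)
    exact affine_mul_sub_le hR hd.le ((mul_le_mul_of_nonneg_left hnN' hd.le).trans hfeas)
      (hf_mono n) (hf_conc n (hNbar.trans hn))
  rw [hEE, hEE] at hstep ⊢
  exact div_affine_succ_le_of_concave hγ hψ.le hN hR_conc hstep

/-- Proposition 2 (full unimodality of the energy efficiency). -/
theorem ee_unimodal
    (B β : ℝ) (hB : 0 < B) (hβ : 0 < β)
    (α : ℕ → ℝ) (hα_pos : ∀ n, 1 ≤ n → 0 < α n)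
    (hα_dec : ∀ n, 1 ≤ n → α (n + 1) ≤ α n)
    (hβα : 1 ≤ β * (α 1) ^ 2)
    (S : ℕ → ℝ) (hS : ∀ N, S N = ∑ n ∈ Finset.Icc 1 N, α n)
    (f : ℕ → ℝ) (hf : ∀ N, f N = B * Real.log (1 + β * (S N) ^ 2))
    (c d : ℝ) (hc : 0 < c) (hd : 0 < d)
    (R : ℕ → ℝ) (hR : ∀ N, R N = (c - d * (N : ℝ)) * f N)
    (γ ψ : ℝ) (hγ : 0 < γ) (hψ : 0 < ψ)
    (EE : ℕ → ℝ) (hEE : ∀ N, EE N = R N / (γ + ψ * (N : ℝ)))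
    (Nbar : ℕ) (hNbar : 1 ≤ Nbar)
    (hfeas : d * ((Nbar : ℝ) + 1) ≤ c)
    (hstep : EE (Nbar + 1) ≤ EE Nbar) :
    ∀ N : ℕ, Nbar ≤ N → d * ((N : ℝ) + 1) ≤ c → EE (N + 1) ≤ EE N :=
  ee_unimodal_general B β hB hβ α hα_pos hα_dec hβα S hS f hf c d hd R hR γ ψ hγ hψ EE hEE Nbar
    hNbar hstep
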